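/- For p a prime greater than 3, the single-qudit operator S = Σ_{B∈Z_p} |ψ_B^{-B(B+2^{-1})}⟩⟨ψ_B^{-B(B+2^{-1})}| is diagonalized by the orthonormal basis of magic states {|f_{-12^{-1}, -8^{-1}, c}⟩ : c ∈ Z_p}; that is, ⟨f_{-12^{-1},-8^{-1},c}| S |f_{-12^{-1},-8^{-1},c'}⟩ = 0 whenever c ≠ c'. -/

import Mathlib

open Complex Matrix BigOperators Finset
open scoped Kronecker

noncomputable section

/-- Additive character `a ↦ exp(2πi a/p)` on `ZMod p`. -/
def chi (p : ℕ) (a : ZMod p) : ℂ := Complex.exp (2 * Real.pi * Complex.I * (a.val : ℂ) / p)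

/-- The shift operator `X : |j⟩ ↦ |j+1⟩`. -/
def Xop (p : ℕ) : Matrix (ZMod p) (ZMod p) ℂ := fun j k => if j = k + 1 then 1 else 0

/-- The clock operator `Z : |j⟩ ↦ ω^j |j⟩`. -/
def Zop (p : ℕ) : Matrix (ZMod p) (ZMod p) ℂ := Matrix.diagonal (fun j => chi p j)

/-- Weyl-Heisenberg displacement operator `D_(x|z) = ω^{2⁻¹ x z} X^x Z^z`. -/
def Dop (p : ℕ) [NeZero p] (x z : ZMod p) : Matrix (ZMod p) (ZMod p) ℂ :=
  chi p ((2 : ZMod p)⁻¹ * x * z) • (Xop p ^ x.val * Zop p ^ z.val)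

/-- The stabilizer MUB vector `|ψ_B^V⟩ = p^{-1/2} Σ_k ω^{2⁻¹ B k² - V k} |k⟩`. -/
def psi (p : ℕ) (B V : ZMod p) : ZMod p → ℂ :=
  fun k => ((Real.sqrt p : ℂ))⁻¹ * chi p ((2 : ZMod p)⁻¹ * B * k ^ 2 - V * k)

/-- The magic state `|f_{a,b,c}⟩ = p^{-1/2} Σ_k ω^{a k³ + b k² + c k} |k⟩`. -/
def magic (p : ℕ) (a b c : ZMod p) : ZMod p → ℂ :=
  fun k => ((Real.sqrt p : ℂ))⁻¹ * chi p (a * k ^ 3 + b * k ^ 2 + c * k)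

/-- Rank-one projector `|v⟩⟨v|`. -/
def proj (p : ℕ) (v : ZMod p → ℂ) : Matrix (ZMod p) (ZMod p) ℂ :=
  fun i j => v i * (starRingEnd ℂ) (v j)

/-- The single-qudit operator `S = Σ_B |ψ_B^{-B(B+2⁻¹)}⟩⟨ψ_B^{-B(B+2⁻¹)}|`. -/
def Sop (p : ℕ) [NeZero p] : Matrix (ZMod p) (ZMod p) ℂ :=
  ∑ B : ZMod p, proj p (psi p B (-B * (B + (2 : ZMod p)⁻¹)))

/-! Expanding `S`, the `B`-th term of `⟨f_c|S|f_c'⟩` is `conj ⟨ψ_B|f_c⟩ * ⟨ψ_B|f_c'⟩`. The overlap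
`⟨ψ_B|f_c⟩` is `p⁻¹` times a sum of `ω` to a cubic in `k` with leading coefficient `-12⁻¹`;
translating `k` by `s_B = -2B - 2⁻¹` removes the quadratic term and leaves a cubic sum independent
of `B`, times a phase that depends on `c` only through `ω^{c s_B}`. So the `B`-th term is a constant
times `ω^{(c' - c) s_B}`, and the sum over `B` is a complete character sum, which vanishes for
`c ≠ c'`. -/

lemma chi_eq_stdAddChar (p : ℕ) [NeZero p] : chi p = ZMod.stdAddChar := by
  ext a
  rw [ZMod.stdAddChar_apply, ZMod.toCircle_apply, chi]

lemma chi_add (p : ℕ) [NeZero p] (a b : ZMod p) : chi p (a + b) = chi p a * chi p b := by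
  rw [chi_eq_stdAddChar, AddChar.map_add_eq_mul]

lemma conj_chi (p : ℕ) [NeZero p] (a : ZMod p) : starRingEnd ℂ (chi p a) = chi p (-a) := by
  rw [chi_eq_stdAddChar, AddChar.map_neg_eq_conj]

lemma sum_chi_mul_eq_zero (N : ℕ) [NeZero N] {t : ZMod N} (ht : t ≠ 0) :
    ∑ x, chi N (t * x) = 0 := by
  simpa [ht, mul_comm, chi_eq_stdAddChar] using
    AddChar.sum_mulShift t (ZMod.isPrimitive_stdAddChar N)

lemma sum_chi_mul_affine_eq_zero (N : ℕ) [NeZero N] {t u : ZMod N} (h : t * u ≠ 0)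
    (v : ZMod N) : ∑ x, chi N (t * (u * x - v)) = 0 :=
  calc ∑ x, chi N (t * (u * x - v)) = chi N (-(t * v)) * ∑ x, chi N (t * u * x) := by
        rw [mul_sum]
        refine sum_congr rfl fun x _ => ?_
        rw [← chi_add]
        ring_nf
    _ = 0 := by rw [sum_chi_mul_eq_zero N h, mul_zero]

theorem sum_addChar_cubic_eq_mul_sum_depressed {R M : Type*} [CommRing R] [Fintype R]
    [CommSemiring M] (ψ : AddChar R M) {a b s : R} (hs : 3 * a * s + b = 0) (c : R) :
    ∑ k, ψ (a * k ^ 3 + b * k ^ 2 + c * k) =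
      ψ (a * s ^ 3 + b * s ^ 2 + c * s) *
        ∑ k, ψ (a * k ^ 3 + (3 * a * s ^ 2 + 2 * b * s + c) * k) := by
  rw [mul_sum]
  refine (Fintype.sum_equiv (Equiv.addRight s) _ _ fun k => ?_).symm
  rw [← AddChar.map_add_eq_mul, Equiv.coe_addRight]
  congr 1
  linear_combination (-k ^ 2) * hs

lemma star_dotProduct_proj_mulVec (p : ℕ) [NeZero p] (u v w : ZMod p → ℂ) :
    star v ⬝ᵥ (proj p u *ᵥ w) = star (star u ⬝ᵥ v) * (star u ⬝ᵥ w) := by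
  simp only [dotProduct, mulVec, proj, Pi.star_apply, star_sum, star_mul', star_star, mul_sum,
    sum_mul]
  rw [sum_comm]
  refine sum_congr rfl fun i _ => sum_congr rfl fun j _ => ?_
  simp only [RCLike.star_def]
  ring

lemma star_psi_dotProduct_magic (p : ℕ) [NeZero p] (B V a b c : ZMod p) :
    star (psi p B V) ⬝ᵥ magic p a b c =
      (p : ℂ)⁻¹ * ∑ k, chi p (a * k ^ 3 + (b - 2⁻¹ * B) * k ^ 2 + (c + V) * k) := by
  have hsqrt : ((Real.sqrt p : ℂ))⁻¹ * ((Real.sqrt p : ℂ))⁻¹ = (p : ℂ)⁻¹ := by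
    rw [← mul_inv, ← Complex.ofReal_mul, Real.mul_self_sqrt (Nat.cast_nonneg p),
      Complex.ofReal_natCast]
  simp only [dotProduct, psi, magic, Pi.star_apply, RCLike.star_def, map_mul, map_inv₀,
    Complex.conj_ofReal, conj_chi, mul_sum]
  refine sum_congr rfl fun k _ => ?_
  rw [mul_mul_mul_comm, hsqrt, ← chi_add]
  exact congrArg (fun x => (p : ℂ)⁻¹ * chi p x) (by ring)

lemma natCast_ne_zero_of_pos_of_lt {p n : ℕ} (hn : 0 < n) (hnp : n < p) : (n : ZMod p) ≠ 0 := by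
  rw [Ne, ZMod.natCast_eq_zero_iff]
  exact Nat.not_dvd_of_pos_of_lt hn hnp

def cubicSum (p : ℕ) [NeZero p] (a c : ZMod p) : ℂ := ∑ k, chi p (a * k ^ 3 + c * k)

section MagicOverlaps

variable {p : ℕ} [Fact p.Prime]

lemma star_psi_dotProduct_magic_eq (hp3 : 3 < p) (B c : ZMod p) :
    star (psi p B (-B * (B + (2 : ZMod p)⁻¹))) ⬝ᵥ magic p (-(12 : ZMod p)⁻¹) (-(8 : ZMod p)⁻¹) c =
      (p : ℂ)⁻¹ * chi p (c * (-2 * B - 2⁻¹) + (2 / 3 * B ^ 3 + B ^ 2 / 2 - 1 / 48)) *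
        cubicSum p (-(12 : ZMod p)⁻¹) (c + 16⁻¹) := by
  have h2 : (2 : ZMod p) ≠ 0 := by
    exact_mod_cast natCast_ne_zero_of_pos_of_lt (n := 2) two_pos (by omega)
  have h3 : (3 : ZMod p) ≠ 0 := by
    exact_mod_cast natCast_ne_zero_of_pos_of_lt (n := 3) three_pos hp3
  have h8 : (8 : ZMod p) ≠ 0 := by simpa [show (8 : ZMod p) = 2 ^ 3 by norm_num] using h2
  have h12 : (12 : ZMod p) ≠ 0 := by
    simpa [show (12 : ZMod p) = 2 ^ 2 * 3 by norm_num] using And.intro h2 h3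
  have h16 : (16 : ZMod p) ≠ 0 := by simpa [show (16 : ZMod p) = 2 ^ 4 by norm_num] using h2
  have h48 : (48 : ZMod p) ≠ 0 := by
    simpa [show (48 : ZMod p) = 2 ^ 4 * 3 by norm_num] using And.intro h2 h3
  have hs : 3 * -(12 : ZMod p)⁻¹ * (-2 * B - 2⁻¹) + (-8⁻¹ - 2⁻¹ * B) = 0 := by
    field_simp
    ring
  have hphase : -(12 : ZMod p)⁻¹ * (-2 * B - 2⁻¹) ^ 3 + (-8⁻¹ - 2⁻¹ * B) * (-2 * B - 2⁻¹) ^ 2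
      + (c + -B * (B + 2⁻¹)) * (-2 * B - 2⁻¹)
      = c * (-2 * B - 2⁻¹) + (2 / 3 * B ^ 3 + B ^ 2 / 2 - 1 / 48) := by
    field_simp
    ring
  have hcoeff : 3 * -(12 : ZMod p)⁻¹ * (-2 * B - 2⁻¹) ^ 2 + 2 * (-8⁻¹ - 2⁻¹ * B) * (-2 * B - 2⁻¹)
      + (c + -B * (B + 2⁻¹)) = c + 16⁻¹ := by
    field_simp
    ring
  rw [star_psi_dotProduct_magic, cubicSum, chi_eq_stdAddChar,
    sum_addChar_cubic_eq_mul_sum_depressed _ hs, hphase, hcoeff, mul_assoc]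

lemma star_magic_dotProduct_proj_psi_mulVec_magic (hp3 : 3 < p) (B c c' : ZMod p) :
    star (magic p (-(12 : ZMod p)⁻¹) (-(8 : ZMod p)⁻¹) c) ⬝ᵥ
        (proj p (psi p B (-B * (B + (2 : ZMod p)⁻¹))) *ᵥ
          magic p (-(12 : ZMod p)⁻¹) (-(8 : ZMod p)⁻¹) c') =
      (p : ℂ)⁻¹ ^ 2 * (star (cubicSum p (-(12 : ZMod p)⁻¹) (c + 16⁻¹)) *
        cubicSum p (-(12 : ZMod p)⁻¹) (c' + 16⁻¹)) * chi p ((c' - c) * (-2 * B - 2⁻¹)) := by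
  set φ : ZMod p := 2 / 3 * B ^ 3 + B ^ 2 / 2 - 1 / 48
  have hphase : starRingEnd ℂ (chi p (c * (-2 * B - 2⁻¹) + φ)) *
      chi p (c' * (-2 * B - 2⁻¹) + φ) = chi p ((c' - c) * (-2 * B - 2⁻¹)) := by
    rw [conj_chi, ← chi_add]
    ring_nf
  rw [star_dotProduct_proj_mulVec, star_psi_dotProduct_magic_eq hp3,
    star_psi_dotProduct_magic_eq hp3]
  simp only [star_mul', star_inv₀, star_natCast, RCLike.star_def]
  linear_combination (p : ℂ)⁻¹ ^ 2 * (starRingEnd ℂ (cubicSum p (-(12 : ZMod p)⁻¹) (c + 16⁻¹)) *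
    cubicSum p (-(12 : ZMod p)⁻¹) (c' + 16⁻¹)) * hphase

end MagicOverlaps

theorem stmt8 (p : ℕ) [Fact p.Prime] (hp3 : 3 < p) (c c' : ZMod p) (hcc : c ≠ c') :
    star (magic p (-(12 : ZMod p)⁻¹) (-(8 : ZMod p)⁻¹) c) ⬝ᵥ
        (Sop p *ᵥ magic p (-(12 : ZMod p)⁻¹) (-(8 : ZMod p)⁻¹) c') = 0 := by
  have h2 : (2 : ZMod p) ≠ 0 := by
    exact_mod_cast natCast_ne_zero_of_pos_of_lt (n := 2) two_pos (by omega)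
  rw [Sop, sum_mulVec, dotProduct_sum]
  simp_rw [star_magic_dotProduct_proj_psi_mulVec_magic hp3]
  rw [← mul_sum, sum_chi_mul_affine_eq_zero p
    (mul_ne_zero (sub_ne_zero.2 hcc.symm) (neg_ne_zero.2 h2)), mul_zero]
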